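/- Let w be a Yamanouchi word over [d] of weight ν. Then under Burge column insertion the insertion tableau is P(w) = Y(ν), the Yamanouchi tableau of shape and content ν, and the recording tableau is Q(w) = U(w). -/

import Mathlib

namespace LRSym

/-! ### Words over the alphabet `{1, …, d}` -/

/-- All letters of `w` lie in `{1, …, d}`. -/
def WordOn (d : ℕ) (w : List ℕ) : Prop := ∀ x ∈ w, 1 ≤ x ∧ x ≤ d

/-- Yamanouchi (lattice/ballot) word: every prefix contains at least as many
letters `i` as letters `i+1`, for all `i ≥ 1`. -/
def IsYam (w : List ℕ) : Prop :=
  ∀ k i, 1 ≤ i → (w.take k).count (i + 1) ≤ (w.take k).count i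

/-- Opposite (anti-)Yamanouchi word over `[d]`: every suffix contains at least
as many letters `i` as letters `i-1`, for all `2 ≤ i ≤ d`. -/
def IsOppYam (d : ℕ) (w : List ℕ) : Prop :=
  ∀ k i, 1 ≤ i → i + 1 ≤ d → (w.drop k).count i ≤ (w.drop k).count (i + 1)

/-- The reverse-complement (dual) word `w^•` over the alphabet `[d]`. -/
def dualWord (d : ℕ) (w : List ℕ) : List ℕ := (w.map fun x => d + 1 - x).reverse

/-- `w^♦` for a Yamanouchi word: the `j`-th occurrence (from the left) of each
letter is replaced by `j`. -/
def diamondWord (w : List ℕ) : List ℕ :=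
  (List.range w.length).map fun k => (w.take (k + 1)).count (w.getD k 0)

/-- `w^♦` for an opposite Yamanouchi word over `[d]` of weight `ν^•`:
the subword of all letters `d-i+1` is replaced by `(ν₁-νᵢ+1) ⋯ (ν₁-1) ν₁`. -/
def diamondOppWord (d : ℕ) (w : List ℕ) : List ℕ :=
  (List.range w.length).map fun k =>
    w.count d - w.count (w.getD k 0) + (w.take (k + 1)).count (w.getD k 0)

open Classical in
/-- `w^♦`: the Yamanouchi version on Yamanouchi words, the opposite version otherwise. -/
noncomputable def diamondAny (d : ℕ) (w : List ℕ) : List ℕ :=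
  if IsYam w then diamondWord w else diamondOppWord d w

/-! ### Crystal reflection operators (signature rule) -/

/-- State after scanning `w` for the bracketing rule on letters `i` (`+`) and
`i+1` (`-`): positions of unmatched `i+1`'s and unmatched `i`'s. -/
def sigState (i : ℕ) (w : List ℕ) : List ℕ × List ℕ :=
  (w.zipIdx.map fun q => (q.2, q.1)).foldl
    (fun st p =>
      if p.2 = i then (st.1, st.2 ++ [p.1])
      else if p.2 = i + 1 then
        if st.2 = [] then (st.1 ++ [p.1], st.2) else (st.1, st.2.dropLast)
      else st)
    ([], [])

/-- The crystal reflection operator `σ_i`: the uncancelled pattern `-^a +^b`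
is replaced by `-^b +^a`. -/
def sigmaOp (i : ℕ) (w : List ℕ) : List ℕ :=
  let st := sigState i w
  let u := st.1 ++ st.2
  let b := st.2.length
  (w.zipIdx.map fun q => (q.2, q.1)).map fun p =>
    if p.1 ∈ u.take b then i + 1 else if p.1 ∈ u.drop b then i else p.2

/-- `σ_k σ_{k-1} ⋯ σ_1` (applied rightmost first). -/
def sigmaChain : ℕ → List ℕ → List ℕ
  | 0, w => w
  | k + 1, w => sigmaOp (k + 1) (sigmaChain k w)

/-- `σ₀ = σ_1 (σ_2 σ_1) (σ_3 σ_2 σ_1) ⋯ (σ_{d-1} ⋯ σ_1)`, a reduced word of the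
longest element of `S_d` in crystal reflection operators. -/
def sigmaZero (d : ℕ) (w : List ℕ) : List ℕ :=
  ((List.range (d - 1)).reverse).foldl (fun v k => sigmaChain (k + 1) v) w

/-! ### Partitions inside the `d × m` rectangle -/

/-- A partition with at most `d` parts, each of size at most `m`
(identified with a function on 0-based row indices). -/
def IsPartIn (d m : ℕ) (p : ℕ → ℕ) : Prop :=
  (∀ i j, i ≤ j → p j ≤ p i) ∧ (∀ i, p i ≤ m) ∧ ∀ i, d ≤ i → p i = 0

/-- The complement `p∨` of `p` inside the `d × m` rectangle. -/
def compl (d m : ℕ) (p : ℕ → ℕ) : ℕ → ℕ := fun i => if i < d then m - p (d - 1 - i) else 0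

/-- The conjugate (transpose) partition `p^t` of a partition with at most `d` parts. -/
def conjP (d : ℕ) (p : ℕ → ℕ) : ℕ → ℕ := fun j => ((Finset.range d).filter fun i => j < p i).card

/-- The reverse `p^•` of `p` (as a vector of length `d`). -/
def revP (d : ℕ) (p : ℕ → ℕ) : ℕ → ℕ := fun i => if i < d then p (d - 1 - i) else 0

/-! ### Fillings of skew shapes (French convention, value 0 = empty cell) -/

/-- `T` is a semistandard filling of the skew shape `lam/mu` on the alphabet `[d]`:
rows weakly increase left to right, columns strictly increase bottom to top. -/
def IsSSYTFill (d : ℕ) (mu lam : ℕ → ℕ) (T : ℕ → ℕ → ℕ) : Prop :=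
  (∀ i j, T i j ≠ 0 ↔ mu i ≤ j ∧ j < lam i) ∧
  (∀ i j j', j ≤ j' → T i j ≠ 0 → T i j' ≠ 0 → T i j ≤ T i j') ∧
  (∀ i i' j, i < i' → T i j ≠ 0 → T i' j ≠ 0 → T i j < T i' j) ∧
  ∀ i j, T i j ≤ d

/-- Reading word of a filling supported in the `d × m` rectangle: rows read
right to left, bottom row to top row. -/
def readingWordT (d m : ℕ) (T : ℕ → ℕ → ℕ) : List ℕ :=
  ((List.range d).map fun i =>
    (((List.range m).map fun j => T i j).filter fun x => x != 0).reverse).flatten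

/-- Column word: columns read bottom to top, rightmost column first. -/
def columnWordT (d m : ℕ) (T : ℕ → ℕ → ℕ) : List ℕ :=
  ((List.range m).map fun c =>
    ((List.range d).map fun i => T i (m - 1 - c)).filter fun x => x != 0).flatten

/-- Position (0-based) of the cell `(i,j)` of `T` in the reading word of `T`. -/
def cellPos (m : ℕ) (T : ℕ → ℕ → ℕ) (i j : ℕ) : ℕ :=
  (∑ i' ∈ Finset.range i, ((Finset.range m).filter fun j' => T i' j' ≠ 0).card) +
    ((Finset.range m).filter fun j' => j < j' ∧ T i j' ≠ 0).card

/-- The rotation `•(T)` of a filling of the `d × m` rectangle: rotate by `π`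
radians and replace each entry `x` by `d + 1 - x`. -/
def rotateT (d m : ℕ) (T : ℕ → ℕ → ℕ) : ℕ → ℕ → ℕ := fun i j =>
  if i < d ∧ j < m ∧ T (d - 1 - i) (m - 1 - j) ≠ 0 then d + 1 - T (d - 1 - i) (m - 1 - j)
  else 0

/-- The orthogonal transpose `♦T` of an LR tableau in the `d × m` rectangle:
the filling of the rotated-transposed shape (inside the `m × d` rectangle)
whose column word is `w(T)^♦`. -/
def odiamondY (d m : ℕ) (T : ℕ → ℕ → ℕ) : ℕ → ℕ → ℕ := fun i j =>
  if i < m ∧ j < d ∧ T (d - 1 - j) (m - 1 - i) ≠ 0 then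
    (diamondWord (readingWordT d m T)).getD (cellPos m T (d - 1 - j) (m - 1 - i)) 0
  else 0

/-- The orthogonal transpose `♦T`, for LR as well as opposite LR tableaux. -/
noncomputable def odiamondAny (d m : ℕ) (T : ℕ → ℕ → ℕ) : ℕ → ℕ → ℕ := fun i j =>
  if i < m ∧ j < d ∧ T (d - 1 - j) (m - 1 - i) ≠ 0 then
    (diamondAny d (readingWordT d m T)).getD (cellPos m T (d - 1 - j) (m - 1 - i)) 0
  else 0

/-- The reversal `e(T)`: the filling of the same shape as `T` whose reading
word is `σ₀(w(T))`. -/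
def reversalT (d m : ℕ) (T : ℕ → ℕ → ℕ) : ℕ → ℕ → ℕ := fun i j =>
  if T i j ≠ 0 then (sigmaZero d (readingWordT d m T)).getD (cellPos m T i j) 0 else 0

/-- `ρ := • ∘ e`. -/
def rhoMap (d m : ℕ) (T : ℕ → ℕ → ℕ) : ℕ → ℕ → ℕ := rotateT d m (reversalT d m T)

/-- `ϱ := ♦ ∘ • ∘ e = ♦ ∘ ρ`. -/
def varrhoMap (d m : ℕ) (T : ℕ → ℕ → ℕ) : ℕ → ℕ → ℕ := odiamondY d m (rhoMap d m T)

/-- Transpose of a filling. -/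
def transposeF (F : ℕ → ℕ → ℕ) : ℕ → ℕ → ℕ := fun i j => F j i

/-! ### LR tableaux -/

/-- LR tableaux of shape `lam/mu` and content `nu` in the `d × m` rectangle. -/
def LRshape (d m : ℕ) (mu nu lam : ℕ → ℕ) : Set (ℕ → ℕ → ℕ) :=
  {T | IsSSYTFill d mu lam T ∧ IsYam (readingWordT d m T) ∧
    ∀ i, (readingWordT d m T).count (i + 1) = nu i}

/-- `LR(μ,ν,λ)`: LR tableaux of shape `λ∨/μ` and content `ν` inside `d × m`. -/
def LRset (d m : ℕ) (mu nu lam : ℕ → ℕ) : Set (ℕ → ℕ → ℕ) :=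
  LRshape d m mu nu (compl d m lam)

/-- Opposite LR tableaux of shape `lam/mu` and content `nu^•` in `d × m`. -/
def LROppShape (d m : ℕ) (mu nu lam : ℕ → ℕ) : Set (ℕ → ℕ → ℕ) :=
  {T | IsSSYTFill d mu lam T ∧ IsOppYam d (readingWordT d m T) ∧
    ∀ i, (readingWordT d m T).count (i + 1) = revP d nu i}

/-- `LR(μ,ν^•,λ)`: opposite LR tableaux of shape `λ∨/μ` and content `ν^•`. -/
def LROppSet (d m : ℕ) (mu nu lam : ℕ → ℕ) : Set (ℕ → ℕ → ℕ) :=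
  LROppShape d m mu nu (compl d m lam)

/-- The Yamanouchi tableau `Y(p)`: row `i` filled with letters `i+1`. -/
def yamFill (p : ℕ → ℕ) : ℕ → ℕ → ℕ := fun i j => if j < p i then i + 1 else 0

/-! ### Burge (column) insertion -/

/-- Column-insert `x` into a single column (stored bottom-to-top): the smallest
entry `≥ x` is bumped out; `x` is appended on top if there is none. -/
def bumpCol : List ℕ → ℕ → List ℕ × Option ℕ
  | [], x => ([x], none)
  | y :: ys, x =>
    if x ≤ y then (x :: ys, some y)
    else
      let p := bumpCol ys x
      (y :: p.1, p.2)

/-- Column insertion of a letter into a tableau stored as its list of columns. -/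
def insertTab : List (List ℕ) → ℕ → List (List ℕ)
  | [], x => [[x]]
  | c :: cs, x =>
    match bumpCol c x with
    | (c', none) => c' :: cs
    | (c', some y) => c' :: insertTab cs y

/-- The Burge insertion tableau `P(w)` (as a list of columns, bottom-to-top). -/
def burgeP (w : List ℕ) : List (List ℕ) := w.foldl insertTab []

/-- Convert a column-list tableau into a filling. -/
def colsToFill (cols : List (List ℕ)) : ℕ → ℕ → ℕ := fun i j => (cols.getD j []).getD i 0

/-- The recording (Q-)tableau of `w` under Burge insertion, as a filling:
the entry at a cell is the index `k` (1-based) of the letter whose insertion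
created that cell. -/
def QrecFill (w : List ℕ) : ℕ → ℕ → ℕ := fun i j =>
  (((List.range (w.length + 1)).find? fun k =>
    decide (i < ((burgeP (w.take k)).getD j []).length)).getD 0)

/-- Schützenberger evacuation of a straight-shape tableau `G` on the alphabet
`[d]` inside `d × m`: `evac(G) = P(w(G)^•)`. -/
def evacFill (d m : ℕ) (G : ℕ → ℕ → ℕ) : ℕ → ℕ → ℕ :=
  colsToFill (burgeP (dualWord d (readingWordT d m G)))

/-- The anti-normal form `Y(p)^a := •(evac Y(p))` inside the `d × m` rectangle. -/
def yamAFill (d m : ℕ) (p : ℕ → ℕ) : ℕ → ℕ → ℕ := rotateT d m (evacFill d m (yamFill p))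

/-! ### The tableau `U(w)` and standard Young tableaux -/

/-- `U(w)`: the filling whose `i`-th row lists, in increasing order, the
(1-based) positions `k` with `w_k = i+1`. -/
def Uword (w : List ℕ) : ℕ → ℕ → ℕ := fun i j =>
  ((((List.range w.length).filter fun k => w.getD k 0 == i + 1).map fun k => k + 1)).getD j 0

/-- `F` is a standard Young tableau of shape `p` (a partition with at most `d`
parts): a bijective filling by `1, …, |p|`, rows and columns strictly increasing. -/
def IsSYT (d : ℕ) (p : ℕ → ℕ) (F : ℕ → ℕ → ℕ) : Prop :=
  (∀ i j, F i j ≠ 0 ↔ j < p i) ∧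
  (∀ i j j', j < j' → j' < p i → F i j < F i j') ∧
  (∀ i i' j, i < i' → j < p i' → F i j < F i' j) ∧
  (∀ v, 1 ≤ v → v ≤ ∑ i ∈ Finset.range d, p i →
    ∃! q : ℕ × ℕ, q.2 < p q.1 ∧ F q.1 q.2 = v) ∧
  ∀ i j, j < p i → 1 ≤ F i j ∧ F i j ≤ ∑ i' ∈ Finset.range d, p i'

/-! ### Recording matrix, companions, standardization -/

/-- `recMat m T r v`: the number of entries `v` in row `r` of `T`. -/
def recMat (m : ℕ) (T : ℕ → ℕ → ℕ) (r v : ℕ) : ℕ :=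
  ((Finset.range m).filter fun j => T r j = v).card

/-- The right companion tableau `ι(T) = G`: row `i` of `G` lists, weakly
increasingly, the (1-based) indices of the rows of `T` containing entry `i+1`. -/
def companion (d m : ℕ) (T : ℕ → ℕ → ℕ) : ℕ → ℕ → ℕ := fun i j =>
  (((List.range d).map fun r => List.replicate (recMat m T r (i + 1)) (r + 1)).flatten).getD j 0

/-- Standardization of a semistandard filling: entries are renumbered
`1, …, s` in increasing order of value, ties broken by increasing column index. -/
def standardize (d m : ℕ) (F : ℕ → ℕ → ℕ) : ℕ → ℕ → ℕ := fun i j =>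
  if F i j = 0 then 0
  else
    1 + (((Finset.range d) ×ˢ (Finset.range m)).filter fun q =>
      F q.1 q.2 ≠ 0 ∧ (F q.1 q.2 < F i j ∨
        (F q.1 q.2 = F i j ∧ (q.2 < j ∨ (q.2 = j ∧ q.1 < i))))).card

/-- The left companion tableau of an LR tableau `T` of shape `λ/μ`:
the entries `≤ d-r+1` of it occupy, in row `j`, the first
`μ_{r+j-1} + Σ_{l<r} m_{r+j-1,l}` cells (cf. the nested Gelfand–Tsetlin
sequence of the paper). -/
def leftCompanion (d m : ℕ) (mu : ℕ → ℕ) (T : ℕ → ℕ → ℕ) : ℕ → ℕ → ℕ := fun j0 c =>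
  if c < mu j0 then
    ((((List.range d).find? fun k0 =>
      decide (j0 ≤ k0 ∧ c < mu (d - (k0 + 1) + j0) +
        ∑ l ∈ Finset.range (d - (k0 + 1)), recMat m T (d - (k0 + 1) + j0) (l + 1))).map
        fun k0 => k0 + 1)).getD 0
  else 0

/-! ### The hybrid involutions ♠ and ♣ -/

/-- The involution `♠` on an LR tableau `T` of outer shape `out` and content
`nu` inside `d × m` (Definition "Map ♠" of the paper): fill the inner shape
with `[Y(μ^t)]^t`, slide each entry `i` down its column to row `i`, then left
so that the entries form `Y(ν)`, erase `Y(ν)` and transpose the remaining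
auxiliary filling. -/
def spadeMap (d m : ℕ) (nu out : ℕ → ℕ) (T : ℕ → ℕ → ℕ) : ℕ → ℕ → ℕ := fun i j =>
  if nu j ≤ i then
    match ((List.range m).filter fun c =>
        decide (j < conjP d out c) && decide (∀ i' < d, T i' c ≠ j + 1))[i - nu j]? with
    | some c => c + 1
    | none => 0
  else 0

/-- The involution `♣` on an LR tableau `T` of inner shape `mu` inside `d × m`
(Definition "Map ♣" of the paper): fill the outer shape with `[Y(λ^t)^a]^t`,
slide the entries right (column by column, as dictated by `ν^t`), then up so
that they form `Y(ν)^a`, erase `Y(ν)^a` and transpose the auxiliary filling. -/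
def clubMap (d m : ℕ) (mu : ℕ → ℕ) (T : ℕ → ℕ → ℕ) : ℕ → ℕ → ℕ := fun i j =>
  let numCols : ℕ → List ℕ := fun r =>
    ((List.range m).filter fun c => T r c != 0).map fun c =>
      m - ((∑ r' ∈ Finset.range r, recMat m T r' (T r c)) +
        ((Finset.range m).filter fun c' => c < c' ∧ T r c' = T r c).card + 1)
  let free : ℕ → List ℕ := fun r =>
    (List.range m).filter fun c => decide (mu r ≤ c) && decide (c ∉ numCols r)
  let auxVals : List ℕ :=
    (List.range d).filterMap fun r =>
      if i ∈ free r then some ((free r).idxOf i + 1) else none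
  if conjP d mu i ≤ j then (auxVals[j - conjP d mu i]?).getD 0 else 0

/-! ### Tableau switching (Benkart–Sottile–Stroomer) -/

/-- Perforated-tableau condition: rows weakly increase, columns strictly
increase, among the cells of the support. -/
def SSWeak (F : ℕ → ℕ → ℕ) : Prop :=
  (∀ i j j', j ≤ j' → F i j ≠ 0 → F i j' ≠ 0 → F i j ≤ F i j') ∧
  ∀ i i' j, i < i' → F i j ≠ 0 → F i' j ≠ 0 → F i j < F i' j

/-- One elementary switch: an `S`-entry and a `T`-entry in adjacent cells
(the `T`-entry directly above or directly to the right) are interchanged,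
provided both perforated tableaux remain valid. -/
def SwitchStep (P Q : (ℕ → ℕ → ℕ) × (ℕ → ℕ → ℕ)) : Prop :=
  ∃ i j i' j',
    ((i' = i + 1 ∧ j' = j) ∨ (i' = i ∧ j' = j + 1)) ∧
    P.1 i j ≠ 0 ∧ P.2 i' j' ≠ 0 ∧ P.1 i' j' = 0 ∧ P.2 i j = 0 ∧
    Q.1 = (fun a b =>
      if a = i ∧ b = j then 0 else if a = i' ∧ b = j' then P.1 i j else P.1 a b) ∧
    Q.2 = (fun a b =>
      if a = i' ∧ b = j' then 0 else if a = i ∧ b = j then P.2 i' j' else P.2 a b) ∧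
    SSWeak Q.1 ∧ SSWeak Q.2

/-- `B` extends `A`: in every row the `A`-cells lie strictly to the left of the
`B`-cells, and in every column strictly below them. -/
def Extends (A B : ℕ → ℕ → ℕ) : Prop :=
  (∀ i j j', A i j ≠ 0 → B i j' ≠ 0 → j < j') ∧
  ∀ i i' j, A i j ≠ 0 → B i' j ≠ 0 → i < i'

/-- The tableau switching `s(S ∪ T) = A ∪ B`: `(A,B)` is obtained from `(S,T)`
by elementary switches and is fully switched (`B` extends `A`). -/
def SwitchResult (S T A B : ℕ → ℕ → ℕ) : Prop :=
  Relation.ReflTransGen SwitchStep (S, T) (A, B) ∧ Extends A B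

/-! ### The set 𝓛𝓡 and the maps ♠, ♦, ϱ on it -/

/-- An element of `𝓛𝓡_{d,n}`: a side tag (`true` for the `d × (n-d)` rectangle,
`false` for the transposed one), a boundary triple `(μ,ν,λ)` and a filling. -/
abbrev LRElt : Type := Bool × (ℕ → ℕ) × (ℕ → ℕ) × (ℕ → ℕ) × (ℕ → ℕ → ℕ)

/-- Dimensions of the ambient rectangle on each side. -/
def sideDims (d m : ℕ) (b : Bool) : ℕ × ℕ := if b then (d, m) else (m, d)

/-- `𝓛𝓡_{d,n}` (with `m = n - d`): the disjoint union of the sets `LR(μ,ν,λ)`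
over all boundary triples of partitions in the rectangle and in its transpose. -/
def LRfamily (d m : ℕ) : Set LRElt :=
  {x | IsPartIn (sideDims d m x.1).1 (sideDims d m x.1).2 x.2.1 ∧
       IsPartIn (sideDims d m x.1).1 (sideDims d m x.1).2 x.2.2.1 ∧
       IsPartIn (sideDims d m x.1).1 (sideDims d m x.1).2 x.2.2.2.1 ∧
       x.2.2.2.2 ∈ LRset (sideDims d m x.1).1 (sideDims d m x.1).2 x.2.1 x.2.2.1 x.2.2.2.1}

/-- `♠ : LR(μ,ν,λ) → LR(ν^t,μ^t,λ^t)` on `𝓛𝓡`. -/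
def spadeE (d m : ℕ) (x : LRElt) : LRElt :=
  (!x.1, conjP (sideDims d m x.1).1 x.2.2.1, conjP (sideDims d m x.1).1 x.2.1,
    conjP (sideDims d m x.1).1 x.2.2.2.1,
    spadeMap (sideDims d m x.1).1 (sideDims d m x.1).2 x.2.2.1
      (compl (sideDims d m x.1).1 (sideDims d m x.1).2 x.2.2.2.1) x.2.2.2.2)

/-- `♦ : LR(μ,ν,λ) → LR(λ^t,ν^t,μ^t)` on `𝓛𝓡`. -/
def diamondE (d m : ℕ) (x : LRElt) : LRElt :=
  (!x.1, conjP (sideDims d m x.1).1 x.2.2.2.1, conjP (sideDims d m x.1).1 x.2.2.1,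
    conjP (sideDims d m x.1).1 x.2.1,
    odiamondY (sideDims d m x.1).1 (sideDims d m x.1).2 x.2.2.2.2)

/-- `ϱ : LR(μ,ν,λ) → LR(μ^t,ν^t,λ^t)` on `𝓛𝓡`. -/
def varrhoE (d m : ℕ) (x : LRElt) : LRElt :=
  (!x.1, conjP (sideDims d m x.1).1 x.2.1, conjP (sideDims d m x.1).1 x.2.2.1,
    conjP (sideDims d m x.1).1 x.2.2.2.1,
    varrhoMap (sideDims d m x.1).1 (sideDims d m x.1).2 x.2.2.2.2)




def col (c : ℕ) : List ℕ := (List.range c).map (· + 1)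

lemma col_eq_range' (c : ℕ) : col c = List.range' 1 c := by
  simp [col, List.range'_eq_map_range, Nat.add_comm]

lemma bumpCol_range'_mem (c : ℕ) : ∀ (a x : ℕ), a + 1 ≤ x → x ≤ a + c →
    bumpCol (List.range' (a+1) c) x = (List.range' (a+1) c, some x) := by
  induction c with
  | zero => intro a x h1 h2; omega
  | succ n ih =>
    intro a x h1 h2
    rw [List.range'_succ]
    rcases Nat.eq_or_lt_of_le h1 with h | h
    · simp [bumpCol, ← h]
    · rw [bumpCol]
      rw [if_neg (by omega)]
      have := ih (a+1) x (by omega) (by omega)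
      simp [this]

lemma bumpCol_range'_top (c : ℕ) : ∀ a, bumpCol (List.range' (a+1) c) (a + c + 1)
    = (List.range' (a+1) (c+1), none) := by
  induction c with
  | zero => intro a; simp [bumpCol, List.range'_succ]
  | succ n ih =>
    intro a
    rw [List.range'_succ, bumpCol, if_neg (by omega)]
    have := ih (a+1)
    have h2 : a + 1 + n + 1 = a + (n+1) + 1 := by omega
    rw [h2] at this
    simp [this, List.range'_succ]

lemma bumpCol_col_mem (c x : ℕ) (h1 : 1 ≤ x) (h2 : x ≤ c) :
    bumpCol (col c) x = (col c, some x) := by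
  rw [col_eq_range']
  have := bumpCol_range'_mem c 0 x (by omega) (by omega)
  simpa using this

lemma bumpCol_col_top (c : ℕ) : bumpCol (col c) (c + 1) = (col (c+1), none) := by
  rw [col_eq_range', col_eq_range']
  have := bumpCol_range'_top c 0
  simpa using this

lemma insertTab_cons_mem (c x : ℕ) (cs : List (List ℕ)) (h1 : 1 ≤ x) (h2 : x ≤ c) :
    insertTab (col c :: cs) x = col c :: insertTab cs x := by
  rw [insertTab, bumpCol_col_mem c x h1 h2]

lemma insertTab_cons_top (c : ℕ) (cs : List (List ℕ)) :
    insertTab (col c :: cs) (c + 1) = col (c+1) :: cs := by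
  rw [insertTab, bumpCol_col_top c]

lemma insertTab_all_pass (x : ℕ) (h1 : 1 ≤ x) : ∀ (L : List (List ℕ)),
    (∀ cl ∈ L, ∃ c, x ≤ c ∧ cl = col c) → insertTab L x = L ++ [[x]] := by
  intro L
  induction L with
  | nil => intro _; simp [insertTab]
  | cons hd tl ih =>
    intro h
    obtain ⟨c, hc, rfl⟩ := h hd (by simp)
    rw [insertTab_cons_mem c x tl h1 hc, ih (fun cl hcl => h cl (by simp [hcl]))]
    simp

lemma insertTab_bump (x : ℕ) (h1 : 1 ≤ x) (R : List (List ℕ)) : ∀ (L : List (List ℕ)),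
    (∀ cl ∈ L, ∃ c, x ≤ c ∧ cl = col c) →
    insertTab (L ++ col (x - 1) :: R) x = L ++ col x :: R := by
  intro L
  induction L with
  | nil =>
    intro _
    simp only [List.nil_append]
    have := insertTab_cons_top (x-1) R
    rwa [show x - 1 + 1 = x by omega] at this
  | cons hd tl ih =>
    intro h
    obtain ⟨c, hc, rfl⟩ := h hd (by simp)
    rw [List.cons_append, insertTab_cons_mem c x (tl ++ col (x-1) :: R) h1 hc, ih (fun cl hcl => h cl (by simp [hcl]))]
    simp

lemma conjP_lt_iff (d : ℕ) (ν : ℕ → ℕ) (hmono : ∀ a b, a ≤ b → ν b ≤ ν a)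
    (hvan : ∀ l, d ≤ l → ν l = 0) (i j : ℕ) :
    i < conjP d ν j ↔ j < ν i := by
  constructor
  · intro h
    by_contra hc
    push_neg at hc
    have hsub : ((Finset.range d).filter fun l => j < ν l) ⊆ Finset.range i := by
      intro l hl
      simp only [Finset.mem_filter, Finset.mem_range] at hl ⊢
      by_contra hli
      push_neg at hli
      have := hmono i l hli
      omega
    have hcard := Finset.card_le_card hsub
    rw [Finset.card_range] at hcard
    simp only [conjP] at h
    omega
  · intro h
    have hid : i < d := by
      by_contra hid; push_neg at hid; have := hvan i hid; omega
    have hsub : Finset.range (i+1) ⊆ (Finset.range d).filter fun l => j < ν l := by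
      intro l hl
      simp only [Finset.mem_range] at hl
      simp only [Finset.mem_filter, Finset.mem_range]
      have := hmono l i (by omega)
      exact ⟨by omega, by omega⟩
    have hcard := Finset.card_le_card hsub
    rw [Finset.card_range] at hcard
    exact hcard

lemma conjP_eq_zero (d : ℕ) (ν : ℕ → ℕ) (hmono : ∀ a b, a ≤ b → ν b ≤ ν a)
    (j : ℕ) (h : ν 0 ≤ j) : conjP d ν j = 0 := by
  simp only [conjP, Finset.card_eq_zero, Finset.filter_eq_empty_iff]
  intro l _
  have := hmono 0 l (Nat.zero_le l)
  omega

lemma map_range_split {α : Type*} (f : ℕ → α) (t n : ℕ) (h : t < n) :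
    (List.range n).map f
      = (List.range t).map f ++ f t :: (List.range (n - t - 1)).map (fun j => f (t + 1 + j)) := by
  conv_lhs => rw [show n = t + (1 + (n - t - 1)) by omega]
  rw [List.range_add, List.map_append, show 1 + (n - t - 1) = (n - t - 1) + 1 by omega]
  congr 1
  rw [List.range_succ_eq_map]
  simp only [List.map_cons, List.map_map]
  refine List.cons_eq_cons.mpr ⟨rfl, ?_⟩
  apply List.map_congr_left
  intro a _
  show f (t + Nat.succ a) = f (t + 1 + a)
  congr 1
  omega

lemma conjP_update_ne (d x : ℕ) (ν : ℕ → ℕ) (j : ℕ) (hj : j ≠ ν (x - 1)) :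
    conjP d (fun l => if l + 1 = x then ν l + 1 else ν l) j = conjP d ν j := by
  unfold conjP
  congr 1
  apply Finset.filter_congr
  intro l _
  by_cases hl : l + 1 = x
  · have : l = x - 1 := by omega
    subst this
    simp only [hl, if_pos]
    constructor <;> intro h <;> omega
  · simp [hl]

lemma conjP_update_eq (d x : ℕ) (ν : ℕ → ℕ) (hx1 : 1 ≤ x) (hxd : x - 1 < d) :
    conjP d (fun l => if l + 1 = x then ν l + 1 else ν l) (ν (x - 1))
      = conjP d ν (ν (x - 1)) + 1 := by
  unfold conjP
  have hx : x - 1 + 1 = x := by omega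
  have hset : ((Finset.range d).filter fun l => ν (x-1) < (if l + 1 = x then ν l + 1 else ν l))
      = insert (x-1) ((Finset.range d).filter fun l => ν (x-1) < ν l) := by
    ext l
    simp only [Finset.mem_filter, Finset.mem_range, Finset.mem_insert]
    by_cases hl : l + 1 = x
    · have : l = x - 1 := by omega
      subst this
      simp [hl, hxd]
    · have hlne : l ≠ x - 1 := by omega
      simp [hl, hlne]
  rw [hset, Finset.card_insert_of_notMem (by simp)]


lemma insert_step (d x : ℕ) (ν : ℕ → ℕ) (hd : 0 < d) (hx1 : 1 ≤ x) (hxd : x ≤ d)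
    (hmono : ∀ a b, a ≤ b → ν b ≤ ν a) (hvan : ∀ l, d ≤ l → ν l = 0)
    (hyam : x = 1 ∨ ν (x - 1) + 1 ≤ ν (x - 2)) :
    insertTab ((List.range (ν 0)).map fun j => col (conjP d ν j)) x
      = (List.range ((fun l => if l + 1 = x then ν l + 1 else ν l) 0)).map
          fun j => col (conjP d (fun l => if l + 1 = x then ν l + 1 else ν l) j) := by
  set ν' : ℕ → ℕ := fun l => if l + 1 = x then ν l + 1 else ν l with hν'
  rcases Nat.eq_or_lt_of_le hx1 with h1 | h2
  · -- x = 1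
    subst h1
    have hν'0 : ν' 0 = ν 0 + 1 := by simp [hν']
    rw [insertTab_all_pass 1 le_rfl _ ?_]
    · rw [hν'0, List.range_succ, List.map_append]
      congr 1
      · apply List.map_congr_left
        intro j hj
        rw [List.mem_range] at hj
        congr 1
        rw [conjP_update_ne d 1 ν j]
        simpa using Nat.ne_of_lt hj
      · have hc : conjP d ν' (ν 0) = 1 := by
          unfold conjP
          have hset : ((Finset.range d).filter fun l => ν 0 < ν' l) = {0} := by
            ext l
            simp only [Finset.mem_filter, Finset.mem_range, Finset.mem_singleton, hν']
            constructor
            · rintro ⟨hld, hl⟩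
              by_contra hl0
              have h1 : l + 1 ≠ 1 := by omega
              rw [if_neg h1] at hl
              have := hmono 0 l (Nat.zero_le l)
              omega
            · rintro rfl
              simp [hd]
          rw [hset]; simp
        simp only [List.map_cons, List.map_nil, hc]
        rfl
    · intro cl hcl
      rw [List.mem_map] at hcl
      obtain ⟨j, hj, rfl⟩ := hcl
      rw [List.mem_range] at hj
      exact ⟨conjP d ν j, (conjP_lt_iff d ν hmono hvan 0 j).mpr hj, rfl⟩
  · -- 2 ≤ x
    have hyam2 : ν (x - 1) + 1 ≤ ν (x - 2) := by
      rcases hyam with h | h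
      · omega
      · exact h
    set t := ν (x - 1) with ht
    have htn : t < ν 0 := by
      have h1 := hmono 0 (x - 2) (Nat.zero_le _)
      omega
    have hxd' : x - 1 < d := by omega
    have hct : conjP d ν t = x - 1 := by
      have hle : ¬ (x - 1 < conjP d ν t) := by
        rw [conjP_lt_iff d ν hmono hvan]
        omega
      have hge : x - 2 < conjP d ν t := by
        rw [conjP_lt_iff d ν hmono hvan]
        omega
      omega
    have hν'0 : ν' 0 = ν 0 := by
      simp only [hν']
      rw [if_neg (by omega)]
    rw [map_range_split (fun j => col (conjP d ν j)) t (ν 0) htn, hct]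
    rw [insertTab_bump x hx1 _ _ ?_]
    · rw [hν'0, map_range_split (fun j => col (conjP d ν' j)) t (ν 0) htn]
      congr 1
      · apply List.map_congr_left
        intro j hj
        rw [List.mem_range] at hj
        congr 1
        exact (conjP_update_ne d x ν j (by omega)).symm
      · congr 1
        · congr 1
          rw [ht, conjP_update_eq d x ν hx1 hxd', hct]
          omega
        · apply List.map_congr_left
          intro j _
          congr 1
          exact (conjP_update_ne d x ν (t + 1 + j) (by omega)).symm
    · intro cl hcl
      rw [List.mem_map] at hcl
      obtain ⟨j, hj, rfl⟩ := hcl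
      rw [List.mem_range] at hj
      refine ⟨conjP d ν j, ?_, rfl⟩
      have : x - 1 < conjP d ν j := by
        rw [conjP_lt_iff d ν hmono hvan]
        omega
      omega




lemma yam_anti (w : List ℕ) (hy : IsYam w) : ∀ a b, a ≤ b → w.count (b+1) ≤ w.count (a+1) := by
  have hstep : ∀ n, w.count (n+1+1) ≤ w.count (n+1) := by
    intro n
    have := hy w.length (n+1) (by omega)
    rwa [List.take_length] at this
  intro a b hab
  induction b with
  | zero =>
    have : a = 0 := by omega
    subst this; exact le_rfl
  | succ n ih =>
    rcases Nat.eq_or_lt_of_le hab with h | h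
    · subst h; exact le_rfl
    · exact le_trans (hstep n) (ih (by omega))

lemma count_vanish (d : ℕ) (w : List ℕ) (hw : WordOn d w) (l : ℕ) (hl : d ≤ l) :
    w.count (l+1) = 0 := by
  rw [List.count_eq_zero]
  intro hmem
  have := hw _ hmem
  omega

lemma isYam_take (w : List ℕ) (k : ℕ) (hy : IsYam w) : IsYam (w.take k) := by
  intro k' i hi
  rw [List.take_take]
  exact hy (min k' k) i hi

lemma burgeP_yam (d : ℕ) (hd : 0 < d) : ∀ (w : List ℕ), WordOn d w → IsYam w →
    ∀ ν : ℕ → ℕ, (∀ i, w.count (i + 1) = ν i) →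
    burgeP w = (List.range (ν 0)).map fun j => col (conjP d ν j) := by
  intro w
  induction w using List.reverseRecOn with
  | nil =>
    intro _ _ ν hcnt
    have h0 : ν 0 = 0 := by rw [← hcnt 0]; simp
    simp [burgeP, h0]
  | append_singleton u x ih =>
    intro hw hy ν hcnt
    have hx1 : 1 ≤ x := (hw x (by simp)).1
    have hxd : x ≤ d := (hw x (by simp)).2
    have hwu : WordOn d u := fun a ha => hw a (by simp [ha])
    have hyu : IsYam u := by
      have h := isYam_take (u ++ [x]) u.length hy
      rwa [List.take_left] at h
    have hmono : ∀ a b, a ≤ b → u.count (b+1) ≤ u.count (a+1) := yam_anti u hyu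
    have hvan : ∀ l, d ≤ l → u.count (l+1) = 0 := fun l hl => count_vanish d u hwu l hl
    have hyamx : x = 1 ∨ u.count (x - 1 + 1) + 1 ≤ u.count (x - 2 + 1) := by
      rcases Nat.eq_or_lt_of_le hx1 with h | h
      · left; omega
      · right
        have h2 := hy (u ++ [x]).length (x - 1) (by omega)
        rw [List.take_length, show x - 1 + 1 = x by omega, List.count_append,
          List.count_append] at h2
        have e1 : List.count x [x] = 1 := by simp
        have e2 : List.count (x-1) [x] = 0 := by
          simp [List.count_singleton', show x ≠ x - 1 by omega]
        rw [show x - 2 + 1 = x - 1 by omega, show x - 1 + 1 = x by omega]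
        omega
    have key := insert_step d x (fun i => u.count (i+1)) hd hx1 hxd hmono hvan hyamx
    have ihu := ih hwu hyu (fun i => u.count (i+1)) (fun i => rfl)
    have hνeq : ν = fun l => if l + 1 = x then u.count (l+1) + 1 else u.count (l+1) := by
      funext l
      rw [← hcnt l, List.count_append]
      by_cases hl : l + 1 = x
      · rw [if_pos hl, hl]; simp
      · rw [if_neg hl]
        have : List.count (l+1) [x] = 0 := by
          simp [List.count_singleton', Ne.symm hl]
        omega
    have hb : burgeP (u ++ [x]) = insertTab (burgeP u) x := by
      unfold burgeP
      exact List.foldl_concat _ _ _ _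
    rw [hb, ihu, hνeq]
    beta_reduce at key
    exact key




lemma burgeP_col_len (d : ℕ) (hd : 0 < d) (w : List ℕ) (hw : WordOn d w) (hy : IsYam w)
    (j : ℕ) :
    ((burgeP w).getD j []).length = conjP d (fun i => w.count (i+1)) j := by
  rw [burgeP_yam d hd w hw hy _ (fun i => rfl)]
  set ν : ℕ → ℕ := fun i => w.count (i+1) with hν
  by_cases hj : j < ν 0
  · have hlen : j < ((List.range (ν 0)).map fun j => col (conjP d ν j)).length := by
      simpa using hj
    rw [List.getD_eq_getElem _ _ hlen]
    simp [col]
  · rw [List.getD_eq_default _ _ (by simpa using Nat.le_of_not_lt hj)]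
    rw [conjP_eq_zero d ν (yam_anti w hy) j (by omega)]
    rfl

lemma find?_range_first (p : ℕ → Bool) (N k : ℕ) (hk : k < N) (hpk : p k = true)
    (hmin : ∀ k' < k, ¬ p k' = true) : (List.range N).find? p = some k := by
  induction N with
  | zero => omega
  | succ n ih =>
    rw [List.range_succ, List.find?_append]
    rcases Nat.lt_or_ge k n with h | h
    · rw [ih h]; rfl
    · have hkn : k = n := by omega
      subst hkn
      have hnone : (List.range k).find? p = none :=
        List.find?_eq_none.mpr (fun x hx => hmin x (List.mem_range.mp hx))
      rw [hnone]
      simp [hpk]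

lemma count_take_eq_countP (w : List ℕ) (x : ℕ) : ∀ k, k ≤ w.length →
    (w.take k).count x = (List.range k).countP (fun p => w.getD p 0 == x) := by
  intro k
  induction k with
  | zero => simp
  | succ n ih =>
    intro hk
    have hn : n < w.length := by omega
    rw [List.take_succ, List.count_append, List.range_succ, List.countP_append, ih (by omega)]
    congr 1
    rw [List.getElem?_eq_getElem hn]
    show List.count x [w[n]] = List.countP (fun p => w.getD p 0 == x) [n]
    rw [List.count_singleton', List.countP_cons, List.getD_eq_getElem _ _ hn]
    simp [beq_iff_eq]

lemma filter_range_spec (pred : ℕ → Bool) : ∀ n j, j < ((List.range n).filter pred).length →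
    pred (((List.range n).filter pred).getD j 0) = true ∧
    (List.range (((List.range n).filter pred).getD j 0)).countP pred = j ∧
    ((List.range n).filter pred).getD j 0 < n := by
  intro n
  induction n with
  | zero => intro j hj; simp at hj
  | succ n ih =>
    intro j hj
    rw [List.range_succ, List.filter_append] at hj ⊢
    by_cases hjn : j < ((List.range n).filter pred).length
    · rw [List.getD_append _ _ _ _ hjn]
      obtain ⟨h1, h2, h3⟩ := ih j hjn
      exact ⟨h1, h2, by omega⟩
    · have hpn : pred n = true := by
        by_contra hg
        have hg' : pred n = false := by simpa using hg
        rw [List.filter_singleton, hg', cond_false, List.append_nil] at hj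
        omega
      rw [List.filter_singleton, hpn, cond_true] at hj ⊢
      rw [List.length_append, List.length_singleton] at hj
      have hje : j = ((List.range n).filter pred).length := by omega
      have hlen : j < (((List.range n).filter pred) ++ [n]).length := by
        rw [List.length_append, List.length_singleton]; omega
      rw [List.getD_eq_getElem _ _ hlen, List.getElem_append_right (by omega)]
      have hz : j - ((List.range n).filter pred).length = 0 := by omega
      simp only [hz, List.getElem_cons_zero]
      refine ⟨hpn, ?_, by omega⟩
      rw [List.countP_eq_length_filter]
      omega

lemma countP_range_strict (pred : ℕ → Bool) (a b : ℕ) (hab : a < b) (ha : pred a = true) :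
    (List.range a).countP pred < (List.range b).countP pred := by
  have h1 : (List.range (a+1)).countP pred = (List.range a).countP pred + 1 := by
    rw [List.range_succ, List.countP_append]
    simp [ha]
  have h2 : (List.range (a+1)).countP pred ≤ (List.range b).countP pred :=
    List.Sublist.countP_le (p := pred) (List.range_sublist.mpr (by omega))
  omega

lemma countP_range_inj (pred : ℕ → Bool) (p p' : ℕ) (hp : pred p = true) (hp' : pred p' = true)
    (h : (List.range p).countP pred = (List.range p').countP pred) : p = p' := by
  rcases Nat.lt_trichotomy p p' with hlt | he | hgt
  · have := countP_range_strict pred p p' hlt hp; omega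
  · exact he
  · have := countP_range_strict pred p' p hgt hp'; omega

lemma count_take_mono (w : List ℕ) (x k k' : ℕ) (h : k ≤ k') :
    (w.take k).count x ≤ (w.take k').count x := by
  have hsub : (w.take k).Sublist (w.take k') := by
    rw [show w.take k = (w.take k').take k by rw [List.take_take]; congr 1; omega]
    exact List.take_sublist _ _
  exact hsub.count_le x

lemma qrec_eq_uword (d : ℕ) (hd : 0 < d) (w : List ℕ) (hw : WordOn d w) (hy : IsYam w)
    (i j : ℕ) : QrecFill w i j = Uword w i j := by
  classical
  set pred : ℕ → Bool := fun p => w.getD p 0 == i + 1 with hpred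
  have hiff : ∀ k, (i < ((burgeP (w.take k)).getD j []).length) ↔ (j < (w.take k).count (i+1)) := by
    intro k
    have hwk : WordOn d (w.take k) := fun a ha => hw a (List.take_subset _ _ ha)
    have hyk := isYam_take w k hy
    rw [burgeP_col_len d hd (w.take k) hwk hyk j]
    exact conjP_lt_iff d _ (yam_anti _ hyk) (fun l hl => count_vanish d _ hwk l hl) i j
  have hfeq : (fun k => decide (i < ((burgeP (w.take k)).getD j []).length))
      = fun k => decide (j < (w.take k).count (i+1)) := by
    funext k
    exact decide_eq_decide.mpr (hiff k)
  have hLlen : ((List.range w.length).filter pred).length = w.count (i+1) := by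
    rw [← List.countP_eq_length_filter, ← count_take_eq_countP w (i+1) w.length le_rfl,
      List.take_length]
  unfold QrecFill Uword
  rw [hfeq]
  by_cases hcase : j < w.count (i+1)
  · have hex : ∃ k, j < (w.take k).count (i+1) := ⟨w.length, by rwa [List.take_length]⟩
    set k₀ := Nat.find hex with hk₀def
    have hk₀ : j < (w.take k₀).count (i+1) := Nat.find_spec hex
    have hk₀len : k₀ ≤ w.length := Nat.find_le (by rwa [List.take_length])
    have hk₀pos : 0 < k₀ := by
      rcases Nat.eq_zero_or_pos k₀ with h0 | h0
      · rw [h0] at hk₀; simp at hk₀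
      · exact h0
    set p := k₀ - 1 with hpdef
    have hple : p < w.length := by omega
    have hqp : ¬ j < (w.take p).count (i+1) := Nat.find_min hex (by omega)
    have hk2 : j < (w.take p).count (i+1) + List.count (i+1) (some w[p]).toList := by
      have : k₀ = p + 1 := by omega
      rw [this, List.take_succ, List.count_append, List.getElem?_eq_getElem hple] at hk₀
      exact hk₀
    have hc1 : List.count (i+1) [w[p]] ≤ 1 := by
      rw [List.count_singleton']
      split <;> omega
    have hwp : w[p] = i + 1 := by
      by_contra hne
      rw [show (some w[p]).toList = [w[p]] from rfl, List.count_singleton',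
        if_neg hne] at hk2
      omega
    have hcountp : (w.take p).count (i+1) = j := by
      rw [show (some w[p]).toList = [w[p]] from rfl, List.count_singleton',
        if_pos hwp] at hk2
      omega
    have hpredp : pred p = true := by
      rw [hpred]
      simp only [List.getD_eq_getElem _ _ hple, hwp, beq_self_eq_true]
    have hcp : (List.range p).countP pred = j := by
      rw [← count_take_eq_countP w (i+1) p (by omega)]
      exact hcountp
    have hjL : j < ((List.range w.length).filter pred).length := by omega
    obtain ⟨hq1, hq2, _⟩ := filter_range_spec pred w.length j hjL
    have hgd : ((List.range w.length).filter pred).getD j 0 = p :=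
      countP_range_inj pred _ p hq1 hpredp (by rw [hq2, hcp])
    have hfind : (List.range (w.length + 1)).find?
        (fun k => decide (j < (w.take k).count (i+1))) = some k₀ := by
      apply find?_range_first _ _ k₀ (by omega) (by simpa using hk₀)
      intro k' hk'
      simpa using Nat.find_min hex hk'
    rw [hfind]
    have hjmap : j < (((List.range w.length).filter pred).map fun k => k + 1).length := by
      rw [List.length_map]; omega
    rw [List.getD_eq_getElem _ _ hjmap, List.getElem_map]
    have : ((List.range w.length).filter pred)[j] = p := by
      rw [← hgd, List.getD_eq_getElem _ _ hjL]
    rw [this]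
    simp only [Option.getD_some]
    omega
  · have hnone : (List.range (w.length + 1)).find?
        (fun k => decide (j < (w.take k).count (i+1))) = none := by
      rw [List.find?_eq_none]
      intro k _
      simp only [decide_eq_true_eq, not_lt]
      have h2 : (w.take k).count (i+1) ≤ w.count (i+1) :=
        ((List.take_sublist k w).count_le (i+1))
      omega
    rw [hnone]
    rw [List.getD_eq_default _ _ (by rw [List.length_map, ← hpred]; omega)]
    rfl

/-- For a Yamanouchi word `w` over `[d]` of weight `ν`, Burge
column insertion gives `P(w) = Y(ν)` (the Yamanouchi tableau of shape and
content `ν`, column `j` being `1, 2, …, ν^t_j`) and `Q(w) = U(w)`. -/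
theorem statement7 (d : ℕ) (hd : 0 < d) (w : List ℕ) (nu : ℕ → ℕ)
    (hw : WordOn d w) (hyam : IsYam w) (hcnt : ∀ i, w.count (i + 1) = nu i) :
    burgeP w = (List.range (nu 0)).map (fun j => (List.range (conjP d nu j)).map (· + 1)) ∧
    (∀ i j, QrecFill w i j = Uword w i j) := by
  constructor
  · rw [burgeP_yam d hd w hw hyam nu hcnt]
    rfl
  · intro i j
    exact qrec_eq_uword d hd w hw hyam i j
end LRSym
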